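/- Differential inequality for the Nesterov Lyapunov function: set v̄₂(t) := ζ²·(1 - β̄(t)ā(t))·β̄(t). Along every solution of the Nesterov system, for all t ∈ [0,1), d/dt [V₁((z₁(t), z₂(t)), t)] ≤ -ā(t)·V₁((z₁(t), z₂(t)), t) - v̄₂(t)·‖z₂(t)‖², and for all t ≥ 1, d/dt [V₁((z₁(t), z₂(t)), t)] ≤ -ā(t)·V₁((z₁(t), z₂(t)), t). -/

import Mathlib

/-!
Write `a = 2/(t+2)`, `b = (t-1)/(t+2)`, `c = ζ²/M`, `U = a (z₁ - z₁*) + z₂` and `w = z₁ + b z₂`.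
The damping `2 d̄ = 3/(t+2)` is chosen so that `U̇ = -(a/2) U - c ∇L(w)`, hence
`V̇₁ = -(a/2)‖U‖² - c ⟪∇L(w), U⟫ + c ⟪∇L(z₁), z₂⟫`. The first-order convexity inequalities
`L(z₁*) ≥ L(w) + ⟪∇L(w), z₁* - w⟫` and `L(w) ≥ L(z₁) + b ⟪∇L(z₁), z₂⟫` turn this into
`V̇₁ ≤ -a V₁ + c (1 - ab) ⟪∇L(z₁) - ∇L(w), z₂⟫` with `1 - ab ≥ 0`. For `t ≥ 1` we have `b ≥ 0`,
and the last inner product is `≤ 0` by monotonicity of `∇L`; for `t < 1` we have `b < 0`, and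
the Lipschitz bound gives `⟪∇L(z₁) - ∇L(w), z₂⟫ ≤ -M b ‖z₂‖²`.
-/

open Set
open scoped RealInnerProductSpace Gradient

section FirstOrder

variable {E : Type*} [NormedAddCommGroup E] [NormedSpace ℝ E] {s : Set E} {f : E → ℝ}
  {f' : E →L[ℝ] ℝ} {x y : E}

theorem ConvexOn.le_of_hasFDerivAt (hf : ConvexOn ℝ s f) (hx : x ∈ s) (hy : y ∈ s)
    (hf' : HasFDerivAt f f' x) : f x + f' (y - x) ≤ f y := by
  let g : ℝ →ᵃ[ℝ] E :=
    (LinearMap.toSpanSingleton ℝ E (y - x)).toAffineMap + AffineMap.const ℝ ℝ x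
  have hg : ∀ r : ℝ, g r = r • (y - x) + x := fun r => rfl
  have hline : HasDerivAt g (y - x) 0 := by
    rw [show (g : ℝ → E) = fun r => r • (y - x) + x from funext hg]
    simpa using ((hasDerivAt_id (0 : ℝ)).smul_const (y - x)).add_const x
  have hderiv : HasDerivAt (f ∘ g) (f' (y - x)) 0 :=
    (by simpa [hg] using hf' : HasFDerivAt f f' (g 0)).comp_hasDerivAt 0 hline
  have hslope := (hf.comp_affineMap g).le_slope_of_hasDerivAt
    (by simpa [hg] using hx) (by simpa [hg] using hy) one_pos hderiv
  simp only [slope_def_field, Function.comp_apply, hg, one_smul, zero_smul, sub_add_cancel,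
    zero_add, sub_zero, div_one] at hslope
  linarith

end FirstOrder

section Gradient

variable {E : Type*} [NormedAddCommGroup E] [InnerProductSpace ℝ E]

theorem inner_map_sub_map_add_smul_le {F : E → E} {M : ℝ}
    (hF : ∀ w u, ‖F w - F u‖ ≤ M * ‖w - u‖) (x v : E) (b : ℝ) :
    ⟪F x - F (x + b • v), v⟫ ≤ M * |b| * ‖v‖ ^ 2 := by
  calc ⟪F x - F (x + b • v), v⟫ ≤ ‖F x - F (x + b • v)‖ * ‖v‖ := real_inner_le_norm _ _
    _ ≤ M * ‖x - (x + b • v)‖ * ‖v‖ := by gcongr; exact hF _ _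
    _ = M * |b| * ‖v‖ ^ 2 := by
      rw [sub_add_cancel_left, norm_neg, norm_smul, Real.norm_eq_abs]; ring

variable [CompleteSpace E]

theorem HasGradientAt.comp_hasDerivAt {f : E → ℝ} {g : E} {z : ℝ → E} {z' : E} {t : ℝ}
    (hf : HasGradientAt f g (z t)) (hz : HasDerivAt z z' t) :
    HasDerivAt (fun s => f (z s)) ⟪g, z'⟫ t := by
  have h := (hasGradientAt_iff_hasFDerivAt.mp hf).comp_hasDerivAt t hz
  rwa [InnerProductSpace.toDual_apply_apply] at h

variable {f : E → ℝ} {s : Set E} {x y : E}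

theorem ConvexOn.le_of_hasGradientAt {g : E} (hf : ConvexOn ℝ s f) (hx : x ∈ s) (hy : y ∈ s)
    (hg : HasGradientAt f g x) : f x + ⟪g, y - x⟫ ≤ f y := by
  simpa using hf.le_of_hasFDerivAt hx hy (hasGradientAt_iff_hasFDerivAt.mp hg)

theorem ConvexOn.inner_gradient_sub_nonneg (hf : ConvexOn ℝ s f) (hx : x ∈ s) (hy : y ∈ s)
    (hfx : DifferentiableAt ℝ f x) (hfy : DifferentiableAt ℝ f y) :
    0 ≤ ⟪∇ f y - ∇ f x, y - x⟫ := by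
  have hxy := hf.le_of_hasGradientAt hx hy hfx.hasGradientAt
  have hyx := hf.le_of_hasGradientAt hy hx hfy.hasGradientAt
  rw [← neg_sub y x, inner_neg_right] at hyx
  rw [inner_sub_left]
  linarith

theorem ConvexOn.inner_gradient_sub_gradient_add_smul_nonpos (hf : ConvexOn ℝ univ f)
    (hdiff : Differentiable ℝ f) (v : E) {b : ℝ} (hb : 0 ≤ b) :
    ⟪∇ f x - ∇ f (x + b • v), v⟫ ≤ 0 := by
  rcases hb.eq_or_lt with rfl | hb
  · simp
  have hmono := hf.inner_gradient_sub_nonneg (mem_univ x) (mem_univ (x + b • v))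
    (hdiff x) (hdiff _)
  rw [add_sub_cancel_left, real_inner_smul_right, ← neg_sub, inner_neg_left] at hmono
  exact neg_nonneg.mp (nonneg_of_mul_nonneg_right hmono hb)

theorem ConvexOn.sub_le_inner_gradient_extrapolated (hf : ConvexOn ℝ univ f)
    (hdiff : Differentiable ℝ f) (x xs v : E) (b : ℝ) :
    f x - f xs ≤ ⟪∇ f (x + b • v), x - xs⟫ + b * ⟪∇ f (x + b • v) - ∇ f x, v⟫ := by
  have hw := hf.le_of_hasGradientAt (mem_univ _) (mem_univ xs) (hdiff (x + b • v)).hasGradientAt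
  have hx := hf.le_of_hasGradientAt (mem_univ _) (mem_univ (x + b • v)) (hdiff x).hasGradientAt
  rw [show xs - (x + b • v) = -(x - xs) - b • v by abel, inner_sub_right, inner_neg_right,
    real_inner_smul_right] at hw
  rw [add_sub_cancel_left, real_inner_smul_right] at hx
  rw [inner_sub_left]
  linarith

end Gradient

section Nesterov

variable {E : Type*} [NormedAddCommGroup E] [InnerProductSpace ℝ E] [CompleteSpace E]
  {L : E → ℝ} {c t : ℝ} {zs : E} {z₁ z₂ : ℝ → E}

/-- The paper's `V₁((x, v), τ)`, with `c` standing for `ζ²/M`. -/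
noncomputable def nesterovLyapunov (L : E → ℝ) (c : ℝ) (zs x v : E) (τ : ℝ) : ℝ :=
  1 / 2 * ‖(2 / (τ + 2)) • (x - zs) + v‖ ^ 2 + c * (L x - L zs)

theorem hasDerivAt_nesterovLyapunov (hL : Differentiable ℝ L) (ht : t + 2 ≠ 0)
    (hz₁ : HasDerivAt z₁ (z₂ t) t)
    (hz₂ : HasDerivAt z₂
      (-((2 * (3 / (2 * (t + 2)))) • z₂ t) - c • ∇ L (z₁ t + ((t - 1) / (t + 2)) • z₂ t)) t) :
    HasDerivAt (fun s => nesterovLyapunov L c zs (z₁ s) (z₂ s) s)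
      (-(2 / (t + 2)) * (1 / 2 * ‖(2 / (t + 2)) • (z₁ t - zs) + z₂ t‖ ^ 2)
        - c * ⟪∇ L (z₁ t + ((t - 1) / (t + 2)) • z₂ t), (2 / (t + 2)) • (z₁ t - zs) + z₂ t⟫
        + c * ⟪∇ L (z₁ t), z₂ t⟫) t := by
  set U := (2 / (t + 2)) • (z₁ t - zs) + z₂ t
  set g := ∇ L (z₁ t + ((t - 1) / (t + 2)) • z₂ t)
  have ha : HasDerivAt (fun s : ℝ => 2 / (s + 2)) (-(2 / (t + 2)) / (t + 2)) t := by
    refine ((hasDerivAt_const t (2 : ℝ)).div ((hasDerivAt_id' t).add_const 2) ht).congr_deriv ?_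
    field_simp
    ring
  have hU : HasDerivAt (fun s => (2 / (s + 2)) • (z₁ s - zs) + z₂ s)
      ((-(1 / (t + 2))) • U - c • g) t := by
    refine ((ha.smul (hz₁.sub_const zs)).add hz₂).congr_deriv ?_
    match_scalars <;> field_simp
    ring
  have hnorm := (hU.inner ℝ hU).const_mul (1 / 2 : ℝ)
  simp only [real_inner_self_eq_norm_sq] at hnorm
  refine (hnorm.add (((hL _).hasGradientAt.comp_hasDerivAt hz₁).sub_const (L zs)
    |>.const_mul c)).congr_deriv ?_
  simp only [U, inner_sub_right, inner_sub_left, real_inner_smul_right, real_inner_smul_left,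
    real_inner_self_eq_norm_sq, real_inner_comm g]
  ring

theorem nesterovLyapunov_deriv_le (hconv : ConvexOn ℝ univ L) (hL : Differentiable ℝ L)
    (hc : 0 ≤ c) (ht : 0 ≤ t) (hz₁ : HasDerivAt z₁ (z₂ t) t)
    (hz₂ : HasDerivAt z₂
      (-((2 * (3 / (2 * (t + 2)))) • z₂ t) - c • ∇ L (z₁ t + ((t - 1) / (t + 2)) • z₂ t)) t) :
    deriv (fun s => nesterovLyapunov L c zs (z₁ s) (z₂ s) s) t
      ≤ -(2 / (t + 2)) * nesterovLyapunov L c zs (z₁ t) (z₂ t) t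
        + c * (1 - ((t - 1) / (t + 2)) * (2 / (t + 2)))
          * ⟪∇ L (z₁ t) - ∇ L (z₁ t + ((t - 1) / (t + 2)) • z₂ t), z₂ t⟫ := by
  rw [(hasDerivAt_nesterovLyapunov hL (by linarith) hz₁ hz₂).deriv, nesterovLyapunov]
  have hconvex := mul_le_mul_of_nonneg_left
    (hconv.sub_le_inner_gradient_extrapolated hL (z₁ t) zs (z₂ t) ((t - 1) / (t + 2)))
    (mul_nonneg hc (by positivity : (0 : ℝ) ≤ 2 / (t + 2)))
  rw [inner_sub_left] at hconvex ⊢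
  rw [inner_add_right, real_inner_smul_right]
  linarith

end Nesterov

theorem nesterov_V1_differential_inequality_general {n : ℕ}
    (L : EuclideanSpace ℝ (Fin n) → ℝ)
    (hC1 : ContDiff ℝ 1 L)
    (hconv : ConvexOn ℝ Set.univ L)
    (zs : EuclideanSpace ℝ (Fin n))
    (M : ℝ) (hM : 0 < M)
    (hLip : ∀ w u, ‖gradient L w - gradient L u‖ ≤ M * ‖w - u‖)
    (ζ : ℝ)
    (z₁ z₂ : ℝ → EuclideanSpace ℝ (Fin n))
    (hz₁ : ∀ t, 0 ≤ t → HasDerivAt z₁ (z₂ t) t)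
    (hz₂ : ∀ t, 0 ≤ t →
      HasDerivAt z₂
        (-((2 * (3 / (2 * (t + 2)))) • z₂ t)
          - (ζ ^ 2 / M) • gradient L (z₁ t + ((t - 1) / (t + 2)) • z₂ t)) t) :
    (∀ t, 0 ≤ t → t < 1 →
      deriv (fun s =>
          (1 / 2) * ‖(2 / (s + 2)) • (z₁ s - zs) + z₂ s‖ ^ 2
            + (ζ ^ 2 / M) * (L (z₁ s) - L zs)) t
        ≤ -(2 / (t + 2))
              * ((1 / 2) * ‖(2 / (t + 2)) • (z₁ t - zs) + z₂ t‖ ^ 2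
                + (ζ ^ 2 / M) * (L (z₁ t) - L zs))
          - (ζ ^ 2 * (1 - ((t - 1) / (t + 2)) * (2 / (t + 2)))
              * ((t - 1) / (t + 2))) * ‖z₂ t‖ ^ 2) ∧
    (∀ t, 1 ≤ t →
      deriv (fun s =>
          (1 / 2) * ‖(2 / (s + 2)) • (z₁ s - zs) + z₂ s‖ ^ 2
            + (ζ ^ 2 / M) * (L (z₁ s) - L zs)) t
        ≤ -(2 / (t + 2))
              * ((1 / 2) * ‖(2 / (t + 2)) • (z₁ t - zs) + z₂ t‖ ^ 2
                + (ζ ^ 2 / M) * (L (z₁ t) - L zs))) := by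
  have hL : Differentiable ℝ L := hC1.differentiable one_ne_zero
  have hc : 0 ≤ ζ ^ 2 / M := by positivity
  have key t (ht : 0 ≤ t) :=
    nesterovLyapunov_deriv_le (zs := zs) hconv hL hc ht (hz₁ t ht) (hz₂ t ht)
  unfold nesterovLyapunov at key
  have hcoef t (ht : 0 ≤ t) : 0 ≤ ζ ^ 2 / M * (1 - ((t - 1) / (t + 2)) * (2 / (t + 2))) := by
    refine mul_nonneg hc (sub_nonneg.mpr ?_)
    rw [div_mul_div_comm, div_le_one (by positivity)]
    nlinarith
  refine ⟨fun t ht ht1 => ?_, fun t ht => ?_⟩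
  · have hX := inner_map_sub_map_add_smul_le hLip (z₁ t) (z₂ t) ((t - 1) / (t + 2))
    rw [abs_of_neg (div_neg_of_neg_of_pos (by linarith) (by linarith))] at hX
    have hlip := mul_le_mul_of_nonneg_left hX (hcoef t ht)
    have hcancel : ζ ^ 2 / M * (1 - ((t - 1) / (t + 2)) * (2 / (t + 2)))
          * (M * -((t - 1) / (t + 2)) * ‖z₂ t‖ ^ 2)
        = -(ζ ^ 2 * (1 - ((t - 1) / (t + 2)) * (2 / (t + 2))) * ((t - 1) / (t + 2)))
          * ‖z₂ t‖ ^ 2 := by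
      field_simp
    linarith [key t ht]
  · have hX := hconv.inner_gradient_sub_gradient_add_smul_nonpos hL (x := z₁ t) (z₂ t)
      (div_nonneg (by linarith : (0 : ℝ) ≤ t - 1) (by linarith : (0 : ℝ) ≤ t + 2))
    linarith [key t (by linarith), mul_nonpos_of_nonneg_of_nonpos (hcoef t (by linarith)) hX]

/-- Differential inequality for the Nesterov Lyapunov function: with
`v̄₂(t) = ζ²(1 - β̄(t)ā(t))β̄(t)`, along every Nesterov solution,
`d/dt V₁(z(t), t) ≤ -ā(t)V₁(z(t), t) - v̄₂(t)‖z₂(t)‖²` for `t ∈ [0,1)`, and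
`d/dt V₁(z(t), t) ≤ -ā(t)V₁(z(t), t)` for `t ≥ 1`. -/
theorem nesterov_V1_differential_inequality {n : ℕ} (hn : 1 ≤ n)
    (L : EuclideanSpace ℝ (Fin n) → ℝ)
    (hC1 : ContDiff ℝ 1 L)
    (hconv : ConvexOn ℝ Set.univ L)
    (zs : EuclideanSpace ℝ (Fin n))
    (hmin : ∀ z, L zs ≤ L z)
    (huniq : ∀ z, (∀ y, L z ≤ L y) → z = zs)
    (M : ℝ) (hM : 0 < M)
    (hLip : ∀ w u, ‖gradient L w - gradient L u‖ ≤ M * ‖w - u‖)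
    (ζ : ℝ) (hζ : 0 < ζ)
    (z₁ z₂ : ℝ → EuclideanSpace ℝ (Fin n))
    (hz₁ : ∀ t, 0 ≤ t → HasDerivAt z₁ (z₂ t) t)
    (hz₂ : ∀ t, 0 ≤ t →
      HasDerivAt z₂
        (-((2 * (3 / (2 * (t + 2)))) • z₂ t)
          - (ζ ^ 2 / M) • gradient L (z₁ t + ((t - 1) / (t + 2)) • z₂ t)) t) :
    (∀ t, 0 ≤ t → t < 1 →
      deriv (fun s =>
          (1 / 2) * ‖(2 / (s + 2)) • (z₁ s - zs) + z₂ s‖ ^ 2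
            + (ζ ^ 2 / M) * (L (z₁ s) - L zs)) t
        ≤ -(2 / (t + 2))
              * ((1 / 2) * ‖(2 / (t + 2)) • (z₁ t - zs) + z₂ t‖ ^ 2
                + (ζ ^ 2 / M) * (L (z₁ t) - L zs))
          - (ζ ^ 2 * (1 - ((t - 1) / (t + 2)) * (2 / (t + 2)))
              * ((t - 1) / (t + 2))) * ‖z₂ t‖ ^ 2) ∧
    (∀ t, 1 ≤ t →
      deriv (fun s =>
          (1 / 2) * ‖(2 / (s + 2)) • (z₁ s - zs) + z₂ s‖ ^ 2
            + (ζ ^ 2 / M) * (L (z₁ s) - L zs)) t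
        ≤ -(2 / (t + 2))
              * ((1 / 2) * ‖(2 / (t + 2)) • (z₁ t - zs) + z₂ t‖ ^ 2
                + (ζ ^ 2 / M) * (L (z₁ t) - L zs))) :=
  nesterov_V1_differential_inequality_general L hC1 hconv zs M hM hLip ζ z₁ z₂ hz₁ hz₂
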